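/- Let B be a Boolean algebra, S a finite subset of B closed under meet ⊓ and containing ⊤, and □ : B → B a map satisfying the modal axioms (m.i) and (m.ii). Then the basic propositional assignments are pairwise exclusive: for all φ, ψ ∈ S with φ ≠ ψ, φ^□ ⊓ ψ^□ = ⊥. -/

import Mathlib

open scoped Classical in
/-- The basic propositional assignment (bpa) of `φ`:
`φ^□ = □φ ⊓ (⊔_{ψ ∈ S, ψ < φ} □ψ)ᶜ`. -/
noncomputable def bpa {B : Type*} [BooleanAlgebra B]
    (S : Finset B) (box : B → B) (φ : B) : B :=
  box φ ⊓ ((S.filter fun ψ => ψ < φ).sup box)ᶜ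

/-!
Two distinct elements `φ, ψ` of `S` have a meet `φ ⊓ ψ ∈ S` strictly below one of them, say `φ`.
Then `φ^□` excludes `□(φ ⊓ ψ)`, while `φ^□ ⊓ ψ^□ ≤ □φ ⊓ □ψ ≤ □(φ ⊓ ψ)` because the modal
axioms make `□` monotone and meet-preserving.
-/

section Box

variable {B : Type*} [BooleanAlgebra B] {box : B → B}

/-- Axiom (m.ii) is the K axiom `□(x ⇨ y) ≤ □x ⇨ □y`. -/
theorem box_himp_le (mii : ∀ x y : B, box (xᶜ ⊔ y) ≤ (box x)ᶜ ⊔ box y) (x y : B) :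
    box (x ⇨ y) ≤ box x ⇨ box y := by
  simpa only [himp_eq, sup_comm] using mii x y

theorem box_monotone (mi : box ⊤ = ⊤)
    (mii : ∀ x y : B, box (xᶜ ⊔ y) ≤ (box x)ᶜ ⊔ box y) : Monotone box := by
  intro x y hxy
  rw [← himp_eq_top_iff, ← top_le_iff]
  calc ⊤ = box (x ⇨ y) := by rw [himp_eq_top_iff.mpr hxy, mi]
    _ ≤ box x ⇨ box y := box_himp_le mii x y

theorem box_inf_le_box_inf (mi : box ⊤ = ⊤)
    (mii : ∀ x y : B, box (xᶜ ⊔ y) ≤ (box x)ᶜ ⊔ box y) (x y : B) :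
    box x ⊓ box y ≤ box (x ⊓ y) := by
  rw [← le_himp_iff]
  calc box x ≤ box (y ⇨ x ⊓ y) := box_monotone mi mii (le_himp_iff.mpr le_rfl)
    _ ≤ box y ⇨ box (x ⊓ y) := box_himp_le mii y (x ⊓ y)

end Box

section Bpa

variable {B : Type*} [BooleanAlgebra B] {S : Finset B} {box : B → B}

theorem bpa_le_box (φ : B) : bpa S box φ ≤ box φ := inf_le_left

theorem bpa_le_compl_box_of_lt {φ χ : B} (hχ : χ ∈ S) (hlt : χ < φ) :
    bpa S box φ ≤ (box χ)ᶜ := by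
  classical
  refine inf_le_right.trans (compl_le_compl ?_)
  exact Finset.le_sup (f := box) (Finset.mem_filter.mpr ⟨hχ, hlt⟩)

theorem bpa_inf_bpa_eq_bot_of_inf_lt (mi : box ⊤ = ⊤)
    (mii : ∀ x y : B, box (xᶜ ⊔ y) ≤ (box x)ᶜ ⊔ box y) {φ ψ : B} (hmem : φ ⊓ ψ ∈ S)
    (hlt : φ ⊓ ψ < φ) : bpa S box φ ⊓ bpa S box ψ = ⊥ := by
  have hbox : bpa S box φ ⊓ bpa S box ψ ≤ box (φ ⊓ ψ) :=
    (inf_le_inf (bpa_le_box φ) (bpa_le_box ψ)).trans (box_inf_le_box_inf mi mii φ ψ)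
  have hcompl : bpa S box φ ⊓ bpa S box ψ ≤ (box (φ ⊓ ψ))ᶜ :=
    inf_le_left.trans (bpa_le_compl_box_of_lt hmem hlt)
  exact le_bot_iff.mp ((le_inf hbox hcompl).trans inf_compl_eq_bot.le)

end Bpa

theorem bpa_exclusive_general {B : Type*} [BooleanAlgebra B]
    (S : Finset B)
    (hmeet : ∀ x ∈ S, ∀ y ∈ S, x ⊓ y ∈ S)
    (box : B → B)
    (mi : box ⊤ = ⊤)
    (mii : ∀ x y : B, box (xᶜ ⊔ y) ≤ (box x)ᶜ ⊔ box y) :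
    ∀ φ ∈ S, ∀ ψ ∈ S, φ ≠ ψ → bpa S box φ ⊓ bpa S box ψ = ⊥ := by
  intro φ hφ ψ hψ hne
  by_cases hle : φ ≤ ψ
  · have hlt : ψ ⊓ φ < ψ := inf_lt_left.mpr fun hge => hne (le_antisymm hle hge)
    rw [inf_comm]
    exact bpa_inf_bpa_eq_bot_of_inf_lt mi mii (hmeet ψ hψ φ hφ) hlt
  · exact bpa_inf_bpa_eq_bot_of_inf_lt mi mii (hmeet φ hφ ψ hψ) (inf_lt_left.mpr hle)

/-- The basic propositional assignments are pairwise exclusive. -/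
theorem bpa_exclusive {B : Type*} [BooleanAlgebra B]
    (S : Finset B)
    (hmeet : ∀ x ∈ S, ∀ y ∈ S, x ⊓ y ∈ S)
    (htop : ⊤ ∈ S)
    (box : B → B)
    (mi : box ⊤ = ⊤)
    (mii : ∀ x y : B, box (xᶜ ⊔ y) ≤ (box x)ᶜ ⊔ box y) :
    ∀ φ ∈ S, ∀ ψ ∈ S, φ ≠ ψ → bpa S box φ ⊓ bpa S box ψ = ⊥ :=
  bpa_exclusive_general S hmeet box mi mii
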